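/- Simultaneous fixed point theorem (syntactic): every modalised system of equations ℰ on a finite set Q of variables has a solution, i.e., there exists a substitution ℱ : q ↦ ψ_q, where no variable of Q occurs in any ψ_q, such that ψ_q ≃ φ_q ℱ for all q ∈ Q (where φ_q = qℰ). -/

import Mathlib

/-!
Cyclic syntax for Cyclic Henkin Logic (Visser, "Cyclic Henkin Logic").

A graph is a directed pointed labeled graph with ordered successors;
formulas of the cyclic modal language `𝕃°` are such graphs over the
modal labels, whose box-occurrences guard all cycles.
-/


theorem finite_option {α : Type} (h : Finite α) : Finite (Option α) := by
  haveI := h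
  haveI : Fintype α := Fintype.ofFinite _
  exact Finite.of_fintype _

/-- Directed pointed labeled graphs with ordered successors over a label
set `L` with arity function `ar`.  The vertex set is finite. -/
structure RGraph (L : Type) (ar : L → ℕ) : Type 1 where
  V : Type
  fin : Finite V
  root : V
  label : V → L
  succ : (a : V) → Fin (ar (label a)) → V

namespace RGraph

variable {L : Type} {ar : L → ℕ}

/-- The edge relation `a Ŝ b`. -/
def Edge (G : RGraph L ar) (a b : G.V) : Prop := ∃ i, G.succ a i = b

/-- Every vertex is reachable from the root by a finite path. -/
def Reachable (G : RGraph L ar) : Prop :=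
  ∀ a, Relation.ReflTransGen G.Edge G.root a

/-- `C` is a cycle: its elements can be arranged in a closed path of
pairwise distinct vertices. -/
def IsCycle (G : RGraph L ar) (C : Set G.V) : Prop :=
  ∃ (k : ℕ) (f : Fin (k + 1) → G.V), Function.Injective f ∧ Set.range f = C ∧
    (∀ i : Fin k, G.Edge (f i.castSucc) (f i.succ)) ∧ G.Edge (f (Fin.last k)) (f 0)

/-- A guard: a set of vertices meeting every cycle. -/
def IsGuard (G : RGraph L ar) (W : Set G.V) : Prop :=
  ∀ C, G.IsCycle C → (C ∩ W).Nonempty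

/-- The number of cycles `c(G)`. -/
noncomputable def numCycles (G : RGraph L ar) : ℕ :=
  Set.ncard {C : Set G.V | G.IsCycle C}

/-- A vertex on a cycle. -/
def OnCycle (G : RGraph L ar) (a : G.V) : Prop := ∃ C, G.IsCycle C ∧ a ∈ C

/-- The root is a cycle vertex. -/
def RootOnCycle (G : RGraph L ar) : Prop := G.OnCycle G.root

/-- Acyclic graphs. -/
def Acyclic (G : RGraph L ar) : Prop := ∀ C, ¬ G.IsCycle C

/-- Bisimulations between graphs. -/
def IsBisim (G G' : RGraph L ar) (R : G.V → G'.V → Prop) : Prop :=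
  ∀ a a', R a a' → ∃ h : G.label a = G'.label a',
    ∀ i : Fin (ar (G.label a)),
      R (G.succ a i) (G'.succ a' (Fin.cast (congrArg ar h) i))

/-- Bisimilarity `G ≃ G'`: some bisimulation relates the roots. -/
def Bisim (G G' : RGraph L ar) : Prop :=
  ∃ R, G.IsBisim G' R ∧ R G.root G'.root

/-- Isomorphism `G ≅ G'`: a bijective bisimulation relating the roots. -/
def Iso (G G' : RGraph L ar) : Prop :=
  ∃ e : G.V ≃ G'.V, G.IsBisim G' (fun a b => e a = b) ∧ e G.root = G'.root

end RGraph

/-- Labels for the cyclic modal language `𝕃°`. -/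
inductive FLab : Type
  | top | bot | var (n : ℕ) | neg | box | and | or | imp
deriving DecidableEq

/-- Arities of the labels. -/
@[reducible] def FLab.ar : FLab → ℕ
  | .top => 0 | .bot => 0 | .var _ => 0
  | .neg => 1 | .box => 1
  | .and => 2 | .or => 2 | .imp => 2

/-- Raw formulas of `𝕃°`: graphs over the modal labels. -/
abbrev Fm := RGraph FLab FLab.ar

namespace Fm

/-- `p` occurs in `φ`. -/
def Occurs (φ : Fm) (p : ℕ) : Prop := ∃ a, φ.label a = .var p

/-- The set `bo(φ)` of box-occurrences. -/
def boOcc (φ : Fm) : Set φ.V := {a | φ.label a = .box}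

/-- The guard condition: every cycle contains a box-occurrence. -/
def Guarded (φ : Fm) : Prop := φ.IsGuard φ.boOcc

/-- `φ` is a formula: a (rooted, reachable) graph whose box-occurrences
form a guard. -/
def WF (φ : Fm) : Prop := φ.Reachable ∧ φ.Guarded

/-- An edge leaving a non-box vertex. -/
def EdgeNB (φ : Fm) (a b : φ.V) : Prop := φ.Edge a b ∧ φ.label a ≠ .box

/-- `φ` is modalised in `p`: every path from the root to a `p`-occurrence
passes through a box-occurrence. -/
def Modalised (φ : Fm) (p : ℕ) : Prop :=
  ∀ a, Relation.ReflTransGen φ.EdgeNB φ.root a → φ.label a ≠ .var p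

theorem Modalised.root_ne {φ : Fm} {p : ℕ} (h : φ.Modalised p) :
    φ.label φ.root ≠ .var p :=
  h φ.root Relation.ReflTransGen.refl

/-! ### Operations on formulas -/

/-- One-point graph with a 0-ary label. -/
def ofLab0 (l : FLab) : Fm where
  V := PUnit
  fin := inferInstance
  root := .unit
  label := fun _ => l
  succ := fun _ _ => .unit

def topFm : Fm := ofLab0 .top
def botFm : Fm := ofLab0 .bot
def varFm (n : ℕ) : Fm := ofLab0 (.var n)

def lab1 (l : FLab) (φ : Fm) : Option φ.V → FLab
  | none => l
  | some a => φ.label a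

/-- Add a fresh root with 1-ary label `l` above `φ`. -/
def ofLab1 (l : FLab) (φ : Fm) : Fm where
  V := Option φ.V
  fin := finite_option φ.fin
  root := none
  label := lab1 l φ
  succ := fun a => match a with
    | none => fun _ => some φ.root
    | some b => fun i => some (φ.succ b i)

def neg (φ : Fm) : Fm := ofLab1 .neg φ
def box (φ : Fm) : Fm := ofLab1 .box φ

def lab2 (l : FLab) (φ ψ : Fm) : Option (φ.V ⊕ ψ.V) → FLab
  | none => l
  | some (.inl a) => φ.label a
  | some (.inr b) => ψ.label b

/-- Add a fresh root with 2-ary label `l` above the disjoint sum of `φ`, `ψ`. -/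
def ofLab2 (l : FLab) (φ ψ : Fm) : Fm where
  V := Option (φ.V ⊕ ψ.V)
  fin := finite_option (by haveI := φ.fin; haveI := ψ.fin; exact inferInstance)
  root := none
  label := lab2 l φ ψ
  succ := fun a => match a with
    | none => fun i => if (i : ℕ) = 0 then some (.inl φ.root) else some (.inr ψ.root)
    | some (.inl a) => fun i => some (.inl (φ.succ a i))
    | some (.inr b) => fun i => some (.inr (ψ.succ b i))

def and (φ ψ : Fm) : Fm := ofLab2 .and φ ψ
def or (φ ψ : Fm) : Fm := ofLab2 .or φ ψ
def imp (φ ψ : Fm) : Fm := ofLab2 .imp φ ψ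

/-- `φ ↔ ψ` as `(φ→ψ) ∧ (ψ→φ)`. -/
def iff (φ ψ : Fm) : Fm := Fm.and (Fm.imp φ ψ) (Fm.imp ψ φ)

/-- The fixed point `Ϝp.φ`: identify the root with all `p`-occurrences,
keeping the label of the root.  (The root is not a `p`-occurrence, e.g.
because `φ` is modalised in `p`.) -/
def fix (φ : Fm) (p : ℕ) (h : φ.label φ.root ≠ .var p) : Fm where
  V := {a : φ.V // φ.label a ≠ .var p}
  fin := by haveI := φ.fin; exact inferInstance
  root := ⟨φ.root, h⟩
  label := fun a => φ.label a.1
  succ := fun a i =>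
    if hb : φ.label (φ.succ a.1 i) = .var p then ⟨φ.root, h⟩
    else ⟨φ.succ a.1 i, hb⟩

/-! ### Substitution -/

def varIdx : FLab → Option ℕ
  | .var q => some q
  | _ => none

/-- The copy of `σ q` hanging at a `q`-occurrence. -/
def copyT (σ : ℕ → Fm) : Option ℕ → Type
  | some q => (σ q).V
  | none => PUnit

theorem copyT_finite (σ : ℕ → Fm) : ∀ o, Finite (copyT σ o)
  | some q => (σ q).fin
  | none => show Finite PUnit from inferInstance

def copyRoot (σ : ℕ → Fm) : ∀ o, copyT σ o
  | some q => (σ q).root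
  | none => .unit

def copyLabel (σ : ℕ → Fm) (d : FLab) : ∀ o, copyT σ o → FLab
  | some q, b => (σ q).label b
  | none, _ => d

/-- Vertices of the substitution `φσ`. -/
def SubV (φ : Fm) (σ : ℕ → Fm) : Type :=
  Σ a : φ.V, copyT σ (varIdx (φ.label a))

def substSucc (φ : Fm) (σ : ℕ → Fm) (a : φ.V) :
    ∀ (o : Option ℕ), o = varIdx (φ.label a) → ∀ b : copyT σ o,
      Fin (copyLabel σ (φ.label a) o b).ar → SubV φ σ
  | some q, h, b, i => ⟨a, cast (congrArg (copyT σ) h) ((σ q).succ b i)⟩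
  | none, _, _, i => ⟨φ.succ a i, copyRoot σ _⟩

/-- Simultaneous substitution: every `q`-occurrence of `φ` is identified
with the root of a disjoint copy of `σ q`, keeping the label of the root
of `σ q`. -/
def subst (φ : Fm) (σ : ℕ → Fm) : Fm where
  V := SubV φ σ
  fin := by
    haveI := φ.fin
    haveI : ∀ a : φ.V, Finite (copyT σ (varIdx (φ.label a))) :=
      fun a => copyT_finite σ _
    exact (inferInstance : Finite (Σ a : φ.V, copyT σ (varIdx (φ.label a))))
  root := ⟨φ.root, copyRoot σ _⟩
  label := fun x => copyLabel σ (φ.label x.1) _ x.2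
  succ := fun x => substSucc φ σ x.1 _ rfl x.2

/-- Substitution of a single variable, `φ[p:ψ]`. -/
def subst1 (φ : Fm) (p : ℕ) (ψ : Fm) : Fm :=
  φ.subst (fun q => if q = p then ψ else varFm q)

/-! ### Snip -/

-- Redirect all incoming edges of the root to a new leaf labeled `p`.
open Classical in
noncomputable def snipC (φ : Fm) (p : ℕ) : Fm where
  V := Option φ.V
  fin := finite_option φ.fin
  root := some φ.root
  label := lab1 (.var p) φ
  succ := fun a => match a with
    | none => Fin.elim0
    | some a => fun i =>
        if φ.succ a i = φ.root then none else some (φ.succ a i)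

-- `snip(φ,p)`: if the root is on a cycle, redirect all incoming edges
-- of the root to a new leaf labeled `p`; otherwise `φ` itself.
open Classical in
noncomputable def snip (φ : Fm) (p : ℕ) : Fm :=
  if φ.RootOnCycle then φ.snipC p else φ

/-- `snip(φ,ψ) := snip(φ,p)[p:ψ]` (for a variable `p` not occurring in `φ`). -/
noncomputable def snipF (φ : Fm) (p : ℕ) (ψ : Fm) : Fm :=
  (φ.snip p).subst1 p ψ

theorem snip_root_ne {φ : Fm} {p : ℕ} (h : φ.RootOnCycle) (hp : ¬ φ.Occurs p) :
    (φ.snip p).label (φ.snip p).root ≠ .var p := by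
  rw [snip, if_pos h]
  exact fun hc => hp ⟨φ.root, hc⟩

/-! ### The transitive closure modality `□•φ := Ϝp.□(φ∧p)` -/

def bslab (φ : Fm) : Option (Option φ.V) → FLab
  | none => .box
  | some none => .and
  | some (some a) => φ.label a

/-- `□•φ := Ϝp.□(φ∧p)`, for `p` not occurring in `φ`: a box-root whose
`∧`-successor returns to the box-root. -/
def boxStar (φ : Fm) : Fm where
  V := Option (Option φ.V)
  fin := finite_option (finite_option φ.fin)
  root := none
  label := bslab φ
  succ := fun a => match a with
    | none => fun _ => some none
    | some none => fun i => if (i : ℕ) = 0 then some (some φ.root) else none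
    | some (some a) => fun i => some (some (φ.succ a i))

/-- `⊡•φ := φ ∧ □•φ`. -/
def boxDotStar (φ : Fm) : Fm := Fm.and φ (boxStar φ)

/-- Finite conjunctions. -/
def bigAnd : List Fm → Fm
  | [] => topFm
  | φ :: l => Fm.and φ (bigAnd l)

/-- Apply a label, as a connective, to arguments. -/
def applyLab : (l : FLab) → (Fin l.ar → Fm) → Fm
  | .top, _ => topFm
  | .bot, _ => botFm
  | .var n, _ => varFm n
  | .neg, f => neg (f 0)
  | .box, f => box (f 0)
  | .and, f => Fm.and (f 0) (f 1)
  | .or, f => Fm.or (f 0) (f 1)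
  | .imp, f => Fm.imp (f 0) (f 1)

/-- First successor (defaulting to `a` itself at leaves). -/
def succ0 (φ : Fm) (a : φ.V) : φ.V :=
  if h : 0 < (φ.label a).ar then φ.succ a ⟨0, h⟩ else a

/-- The subgraph of `φ` generated by `a`. -/
def restrict (φ : Fm) (a : φ.V) : Fm where
  V := {b : φ.V // Relation.ReflTransGen φ.Edge a b}
  fin := by haveI := φ.fin; exact inferInstance
  root := ⟨a, Relation.ReflTransGen.refl⟩
  label := fun b => φ.label b.1
  succ := fun b i => ⟨φ.succ b.1 i, b.2.tail ⟨i, rfl⟩⟩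

/-- A variable not occurring in `φ`. -/
noncomputable def freshVar (φ : Fm) : ℕ := by
  classical
  haveI := φ.fin
  haveI : Fintype φ.V := Fintype.ofFinite _
  exact Finset.univ.sup fun a => match φ.label a with | .var q => q + 1 | _ => 0

/-- `snip(φ,⊤)`. -/
noncomputable def snipTop (φ : Fm) : Fm := φ.snipF φ.freshVar topFm

/-- The list of box-occurrences of `φ`. -/
noncomputable def boxOccList (φ : Fm) : List φ.V := by
  classical
  haveI := φ.fin
  haveI : Fintype φ.V := Fintype.ofFinite _
  exact (Finset.univ.filter fun a => φ.label a = FLab.box).toList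

end Fm

/-! ### Propositional tautologies (as parse trees) -/

inductive PForm : Type
  | var (n : ℕ) | top | bot
  | neg (A : PForm) | and (A B : PForm) | or (A B : PForm) | imp (A B : PForm)

def PForm.eval (v : ℕ → Bool) : PForm → Bool
  | .var n => v n
  | .top => true
  | .bot => false
  | .neg A => !A.eval v
  | .and A B => A.eval v && B.eval v
  | .or A B => A.eval v || B.eval v
  | .imp A B => !A.eval v || B.eval v

/-- Propositional tautology. -/
def PForm.Taut (A : PForm) : Prop := ∀ v, A.eval v = true

/-- Substitution instance of a parse tree by formulas of `𝕃°`. -/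
def PForm.substFm (σ : ℕ → Fm) : PForm → Fm
  | .var n => σ n
  | .top => Fm.topFm
  | .bot => Fm.botFm
  | .neg A => Fm.neg (A.substFm σ)
  | .and A B => Fm.and (A.substFm σ) (B.substFm σ)
  | .or A B => Fm.or (A.substFm σ) (B.substFm σ)
  | .imp A B => Fm.imp (A.substFm σ) (B.substFm σ)

/-! ### Cyclic Henkin Logic -/

/-- Cyclic Henkin Logic `CHL`: modus ponens, necessitation, substitution
instances of propositional tautologies, distribution, bisimilarity, and
Löb's Rule. -/
inductive CHL : Fm → Prop
  | mp {φ ψ : Fm} : CHL (Fm.imp φ ψ) → CHL φ → CHL ψ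
  | nec {φ : Fm} : CHL φ → CHL (Fm.box φ)
  | taut {A : PForm} (σ : ℕ → Fm) : A.Taut → CHL (A.substFm σ)
  | k (φ ψ : Fm) : CHL (Fm.imp (Fm.box (Fm.imp φ ψ)) (Fm.imp (Fm.box φ) (Fm.box ψ)))
  | bisim {φ ψ : Fm} : RGraph.Bisim φ ψ → CHL (Fm.iff φ ψ)
  | lob {φ : Fm} : CHL (Fm.imp (Fm.box φ) φ) → CHL φ

/-- `GL°`: `CHL` plus the axiom scheme `□φ → □□φ`. -/
inductive GLo : Fm → Prop
  | mp {φ ψ : Fm} : GLo (Fm.imp φ ψ) → GLo φ → GLo ψ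
  | nec {φ : Fm} : GLo φ → GLo (Fm.box φ)
  | taut {A : PForm} (σ : ℕ → Fm) : A.Taut → GLo (A.substFm σ)
  | k (φ ψ : Fm) : GLo (Fm.imp (Fm.box (Fm.imp φ ψ)) (Fm.imp (Fm.box φ) (Fm.box ψ)))
  | bisim {φ ψ : Fm} : RGraph.Bisim φ ψ → GLo (Fm.iff φ ψ)
  | lob {φ : Fm} : GLo (Fm.imp (Fm.box φ) φ) → GLo φ
  | four (φ : Fm) : GLo (Fm.imp (Fm.box φ) (Fm.box (Fm.box φ)))

/-- Löb's Logic `GL` on the acyclic formulas. -/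
inductive GLlogic : Fm → Prop
  | mp {φ ψ : Fm} : GLlogic (Fm.imp φ ψ) → GLlogic φ → GLlogic ψ
  | nec {φ : Fm} : GLlogic φ → GLlogic (Fm.box φ)
  | taut {A : PForm} (σ : ℕ → Fm) : (∀ q, (σ q).Acyclic) → A.Taut → GLlogic (A.substFm σ)
  | k (φ ψ : Fm) : φ.Acyclic → ψ.Acyclic →
      GLlogic (Fm.imp (Fm.box (Fm.imp φ ψ)) (Fm.imp (Fm.box φ) (Fm.box ψ)))
  | bisim {φ ψ : Fm} : φ.Acyclic → ψ.Acyclic → RGraph.Bisim φ ψ → GLlogic (Fm.iff φ ψ)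
  | lob {φ : Fm} : φ.Acyclic → GLlogic (Fm.imp (Fm.box φ) φ) → GLlogic φ
  | four (φ : Fm) : φ.Acyclic → GLlogic (Fm.imp (Fm.box φ) (Fm.box (Fm.box φ)))

/-! ### Systems of equations -/

/-- The system `ℰ` (given by `E` on the finite variable set `Q`) is
modalised: its dependency graph is acyclic. -/
def SysModalised (Q : Finset ℕ) (E : ℕ → Fm) : Prop :=
  ∀ q ∈ Q, ¬ Relation.TransGen
      (fun x y => x ∈ Q ∧ y ∈ Q ∧ ¬ (E x).Modalised y) q q

/-- The substitution determined by a solution candidate `F` on `Q`. -/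
def sysSubst (Q : Finset ℕ) (F : ℕ → Fm) : ℕ → Fm :=
  fun q => if q ∈ Q then F q else Fm.varFm q

/-- `F` solves the system `E` on `Q`. -/
def IsSolution (Q : Finset ℕ) (E : ℕ → Fm) (F : ℕ → Fm) : Prop :=
  (∀ q ∈ Q, (F q).WF) ∧
  (∀ q ∈ Q, ∀ q' ∈ Q, ¬ (F q).Occurs q') ∧
  (∀ q ∈ Q, RGraph.Bisim (F q) ((E q).subst (sysSubst Q F)))

/-! ### Local translations -/

/-- A local translation of the formula `φ` into the logic `Λ`. -/
def IsLocalTranslation (Λ : Fm → Prop) (φ : Fm) (T : φ.V → Fm) : Prop :=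
  ∀ a : φ.V, Λ (Fm.iff (T a) (Fm.applyLab (φ.label a) (fun i => T (φ.succ a i))))

-- Substitution determined by a finite assignment.
open Classical in
noncomputable def substOf {ι : Type} (s : ι → ℕ) (ψ : ι → Fm) : ℕ → Fm :=
  fun q => if h : ∃ i, s i = q then ψ h.choose else Fm.varFm q

/-- The characterising equations of the de Jongh–Sambin map `js*`,
defined by course-of-values recursion on the number of cycles and guard
recursion on the box-occurrences on a cycle. -/
def IsJsStar (jsS : (φ : Fm) → φ.V → Fm) : Prop :=
  (∀ (φ : Fm) (a : φ.V), ¬ (φ.label a = .box ∧ φ.OnCycle a) →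
      jsS φ a = Fm.applyLab (φ.label a) (fun i => jsS φ (φ.succ a i))) ∧
  (∀ (φ : Fm) (a : φ.V), φ.label a = .box → φ.OnCycle a →
      jsS φ a = jsS (Fm.snipTop (φ.restrict a)) (Fm.snipTop (φ.restrict a)).root) ∧
  (∀ (φ : Fm) (a : φ.V), (jsS φ a).Acyclic)


/-! ### Auxiliary development for the simultaneous fixed point theorem -/

namespace SFPaux

open Relation

variable (Q : Finset ℕ) (E : ℕ → Fm)

abbrev QT := {n : ℕ // n ∈ Q}

abbrev BV := Option (Σ c : QT Q, (E c.1).V)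

instance : Finite (BV Q E) := by
  have : ∀ c : QT Q, Finite (E c.1).V := fun c => (E c.1).fin
  exact finite_option inferInstance

/-- Dependency relation between variables. -/
def Dep (x y : ℕ) : Prop := x ∈ Q ∧ y ∈ Q ∧ ¬ (E x).Modalised y

/-- Well-founded order used to resolve variable chains. -/
def Slt (a b : QT Q) : Prop := Dep Q E b.1 a.1

theorem wfS (hmod : SysModalised Q E) : WellFounded (Slt Q E) := by
  have hwf : WellFounded (Relation.TransGen (Slt Q E)) := by
    have : IsTrans (QT Q) (Relation.TransGen (Slt Q E)) := ⟨fun _ _ _ h1 h2 => h1.trans h2⟩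
    have : IsIrrefl (QT Q) (Relation.TransGen (Slt Q E)) := by
      constructor
      intro a ha
      have : Relation.TransGen (Dep Q E) a.1 a.1 := by
        refine Relation.TransGen.swap (r := fun x y => Dep Q E y x) _ _ ?_
        have := Relation.TransGen.mono (r := Slt Q E)
          (p := fun x y => Dep Q E y.1 x.1) (fun x y h => h) _ _ ha
        -- transfer along Subtype.val
        exact Relation.TransGen.lift Subtype.val (fun x y h => h) _ _ this
      exact hmod a.1 a.2 (Relation.TransGen.mono (fun x y h => h) _ _ this)
    exact Finite.wellFounded_of_trans_of_irrefl _
  exact Subrelation.wf (fun {x y} h => Relation.TransGen.single h) hwf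

open Classical in
/-- Resolve the chain of variable-labelled roots starting at `p`. -/
noncomputable def resRoot (hmod : SysModalised Q E) : QT Q → BV Q E :=
  (wfS Q E hmod).fix fun p ih =>
    if hc : ∃ p' : QT Q, (E p.1).label (E p.1).root = .var p'.1 then
      ih hc.choose ⟨p.2, hc.choose.2, fun hm => hm.root_ne hc.choose_spec⟩
    else some ⟨p, (E p.1).root⟩

theorem var_inj {m n : ℕ} (h : (FLab.var m) = .var n) : m = n := by
  cases h; rfl

theorem varIdx_eq_some {l : FLab} {n : ℕ} (h : Fm.varIdx l = some n) : l = .var n := by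
  cases l <;> simp [Fm.varIdx] at h <;> simp [h]

theorem varIdx_eq_none {l : FLab} (h : Fm.varIdx l = none) : ∀ n, l ≠ .var n := by
  cases l <;> simp [Fm.varIdx] at h ⊢

open Classical in
theorem resRoot_eq (hmod : SysModalised Q E) (p : QT Q) :
    resRoot Q E hmod p =
      if hc : ∃ p' : QT Q, (E p.1).label (E p.1).root = .var p'.1 then
        resRoot Q E hmod hc.choose
      else some ⟨p, (E p.1).root⟩ := by
  unfold resRoot
  rw [WellFounded.fix_eq]

theorem resRoot_spec (hmod : SysModalised Q E) (p : QT Q) :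
    ∃ c : QT Q, resRoot Q E hmod p = some ⟨c, (E c.1).root⟩ ∧
      Relation.ReflTransGen (Dep Q E) p.1 c.1 ∧
      ∀ p' ∈ Q, (E c.1).label (E c.1).root ≠ .var p' := by
  induction p using (wfS Q E hmod).induction with
  | _ p ih =>
    rw [resRoot_eq]
    split
    · next hc =>
      obtain ⟨c, h1, h2, h3⟩ := ih hc.choose
        ⟨p.2, hc.choose.2, fun hm => hm.root_ne hc.choose_spec⟩
      exact ⟨c, h1, Relation.ReflTransGen.head
        ⟨p.2, hc.choose.2, fun hm => hm.root_ne hc.choose_spec⟩ h2, h3⟩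
    · next hc =>
      refine ⟨p, rfl, Relation.ReflTransGen.refl, ?_⟩
      intro p' hp' hlab
      exact hc ⟨⟨p', hp'⟩, hlab⟩

/-- Total version of `resRoot`. -/
noncomputable def resRootT (hmod : SysModalised Q E) (n : ℕ) : BV Q E :=
  if hn : n ∈ Q then resRoot Q E hmod ⟨n, hn⟩ else none

/-- Labels of the big graph. -/
def bvLabel : BV Q E → FLab
  | none => .top
  | some u => (E u.1.1).label u.2

open Classical in
/-- Successors in the big graph: variable occurrences from `Q` are
redirected to the (resolved) root of the corresponding component. -/
noncomputable def bvSucc (hmod : SysModalised Q E) :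
    (u : BV Q E) → Fin (bvLabel Q E u).ar → BV Q E
  | none => fun i => i.elim0
  | some ⟨c, x⟩ => fun i =>
      if h : ∃ p, (E c.1).label ((E c.1).succ x i) = .var p ∧ p ∈ Q then
        resRootT Q E hmod h.choose
      else some ⟨c, (E c.1).succ x i⟩

/-- The big graph with root determined by `n`. -/
noncomputable def Bg (hmod : SysModalised Q E) (n : ℕ) : Fm where
  V := BV Q E
  fin := inferInstance
  root := resRootT Q E hmod n
  label := bvLabel Q E
  succ := bvSucc Q E hmod

/-- The solution substitution. -/
noncomputable def Fsol (hmod : SysModalised Q E) (n : ℕ) : Fm :=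
  (Bg Q E hmod n).restrict (Bg Q E hmod n).root

end SFPaux


namespace SFPaux

open Relation

variable (Q : Finset ℕ) (E : ℕ → Fm)

/-- Transport a two-argument predicate along an equality of sigma pairs. -/
theorem sig_elim {c1 c2 : QT Q} {v1 : (E c1.1).V} {v2 : (E c2.1).V}
    (h : (⟨c1, v1⟩ : Σ c : QT Q, (E c.1).V) = ⟨c2, v2⟩)
    (P : (c : QT Q) → (E c.1).V → Prop) (hp : P c1 v1) : P c2 v2 := by
  injection h with hc hv
  subst hc
  rw [← eq_of_heq hv]
  exact hp

/-- The edge relation of the big graph. -/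
noncomputable def BE (hmod : SysModalised Q E) (u v : BV Q E) : Prop :=
  ∃ i, bvSucc Q E hmod u i = v

theorem Bg_edge (hmod : SysModalised Q E) (n : ℕ) :
    (Bg Q E hmod n).Edge = BE Q E hmod := rfl

/-- Resolved vertices: not labelled by a variable of `Q`. -/
def Res (u : BV Q E) : Prop := ∀ p ∈ Q, bvLabel Q E u ≠ .var p

theorem res_resRootT (hmod : SysModalised Q E) (n : ℕ) :
    Res Q E (resRootT Q E hmod n) := by
  unfold resRootT
  split
  · next hn =>
    obtain ⟨c, h1, _, h3⟩ := resRoot_spec Q E hmod ⟨n, hn⟩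
    rw [h1]
    exact h3
  · intro p _ h
    simp [bvLabel] at h

open Classical in
theorem res_bvSucc (hmod : SysModalised Q E) (u : BV Q E) (i : Fin (bvLabel Q E u).ar) :
    Res Q E (bvSucc Q E hmod u i) := by
  match u with
  | none => exact i.elim0
  | some ⟨c, x⟩ =>
    show Res Q E (if h : ∃ p, (E c.1).label ((E c.1).succ x i) = .var p ∧ p ∈ Q then
        resRootT Q E hmod h.choose else some ⟨c, (E c.1).succ x i⟩)
    split
    · exact res_resRootT Q E hmod _
    · next h =>
      intro p hp hl
      exact h ⟨p, hl, hp⟩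

theorem res_reach (hmod : SysModalised Q E) (n : ℕ) (u : BV Q E)
    (hu : Relation.ReflTransGen (BE Q E hmod) (resRootT Q E hmod n) u) :
    Res Q E u := by
  induction hu with
  | refl => exact res_resRootT Q E hmod n
  | tail _ he _ =>
    obtain ⟨i, hi⟩ := he
    rw [← hi]
    exact res_bvSucc Q E hmod _ i

open Classical in
theorem reach_some (hmod : SysModalised Q E) (n : ℕ) (hn : n ∈ Q) (u : BV Q E)
    (hu : Relation.ReflTransGen (BE Q E hmod) (resRootT Q E hmod n) u) :
    ∃ c v, u = some ⟨c, v⟩ := by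
  induction hu with
  | refl =>
    obtain ⟨c, h1, _, _⟩ := resRoot_spec Q E hmod ⟨n, hn⟩
    rw [resRootT, dif_pos hn, h1]
    exact ⟨c, _, rfl⟩
  | tail _ he ih =>
    obtain ⟨c, v, rfl⟩ := ih
    obtain ⟨i, hi⟩ := he
    rw [← hi]
    show ∃ c' v', (if h : ∃ p, (E c.1).label ((E c.1).succ v i) = .var p ∧ p ∈ Q then
        resRootT Q E hmod h.choose else some ⟨c, (E c.1).succ v i⟩) = some ⟨c', v'⟩
    split
    · next h =>
      rw [resRootT, dif_pos h.choose_spec.2]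
      obtain ⟨c', h1, _, _⟩ := resRoot_spec Q E hmod ⟨h.choose, h.choose_spec.2⟩
      rw [h1]
      exact ⟨c', _, rfl⟩
    · exact ⟨c, _, rfl⟩

/-- A graph restricted to its own root is reachable. -/
theorem restrict_root_reachable (φ : Fm) : (φ.restrict φ.root).Reachable := by
  rintro ⟨b, hb⟩
  induction hb with
  | refl => exact Relation.ReflTransGen.refl
  | @tail m b hpath hedge ih =>
    refine Relation.ReflTransGen.tail ih ?_
    obtain ⟨i, hi⟩ := hedge
    exact ⟨i, Subtype.ext hi⟩

theorem Fsol_reachable (hmod : SysModalised Q E) (n : ℕ) :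
    (Fsol Q E hmod n).Reachable :=
  restrict_root_reachable _

theorem Fsol_not_occurs (hmod : SysModalised Q E) (n : ℕ) (p : ℕ) (hp : p ∈ Q) :
    ¬ (Fsol Q E hmod n).Occurs p := by
  rintro ⟨⟨u, hu⟩, hl⟩
  exact res_reach Q E hmod n u hu p hp hl

end SFPaux


namespace SFPaux

open Relation

variable (Q : Finset ℕ) (E : ℕ → Fm)

theorem edge_transport {c c0 : QT Q} {v : (E c.1).V} {v0 v1 : (E c0.1).V}
    (h1 : (⟨c, v⟩ : Σ c : QT Q, (E c.1).V) = ⟨c0, v0⟩)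
    (j : Fin ((E c.1).label v).ar)
    (h2 : (⟨c, (E c.1).succ v j⟩ : Σ c : QT Q, (E c.1).V) = ⟨c0, v1⟩) :
    (E c0.1).Edge v0 v1 := by
  injection h1 with hc hv
  subst hc
  have hv' := eq_of_heq hv
  subst hv'
  injection h2 with hc2 hv2
  exact ⟨j, hv2⟩

theorem sig_fst {c1 c2 : QT Q} {v1 : (E c1.1).V} {v2 : (E c2.1).V}
    (h : (⟨c1, v1⟩ : Σ c : QT Q, (E c.1).V) = ⟨c2, v2⟩) : c1 = c2 :=
  congrArg Sigma.fst h

/-- A jump edge on the cycle. -/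
noncomputable def JumpAt (hmod : SysModalised Q E) {k : ℕ} (g : Fin (k + 1) → BV Q E)
    (i : Fin (k + 1)) : Prop :=
  ∃ (c : QT Q) (v : (E c.1).V) (j : Fin ((E c.1).label v).ar) (p : ℕ),
    g i = some ⟨c, v⟩ ∧ p ∈ Q ∧ (E c.1).label ((E c.1).succ v j) = .var p ∧
    g (i + 1) = resRootT Q E hmod p

/-- An internal edge on the cycle. -/
def IntAt {k : ℕ} (g : Fin (k + 1) → BV Q E) (i : Fin (k + 1)) : Prop :=
  ∃ (c : QT Q) (v : (E c.1).V) (j : Fin ((E c.1).label v).ar),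
    g i = some ⟨c, v⟩ ∧ g (i + 1) = some ⟨c, (E c.1).succ v j⟩ ∧
    ∀ p ∈ Q, (E c.1).label ((E c.1).succ v j) ≠ .var p

open Classical in
theorem edge_analysis (hmod : SysModalised Q E) {k : ℕ} (g : Fin (k + 1) → BV Q E)
    (i : Fin (k + 1)) {c : QT Q} {v : (E c.1).V} (hdec : g i = some ⟨c, v⟩)
    (he : BE Q E hmod (g i) (g (i + 1))) :
    IntAt Q E g i ∨ JumpAt Q E hmod g i := by
  rw [hdec] at he
  obtain ⟨j, hj⟩ := he
  have hj' : (if h : ∃ p, (E c.1).label ((E c.1).succ v j) = .var p ∧ p ∈ Q then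
      resRootT Q E hmod h.choose else some ⟨c, (E c.1).succ v j⟩) = g (i + 1) := hj
  clear hj
  split at hj'
  · next h =>
    right
    exact ⟨c, v, j, h.choose, hdec, h.choose_spec.2, h.choose_spec.1, hj'.symm⟩
  · next h =>
    left
    exact ⟨c, v, j, hdec, hj'.symm, fun p hp hl => h ⟨p, hl, hp⟩⟩

/-- `u` is reachable from the root of its component along non-box edges. -/
def RootPath (u : BV Q E) : Prop :=
  ∃ (c : QT Q) (v : (E c.1).V), u = some ⟨c, v⟩ ∧
    Relation.ReflTransGen (E c.1).EdgeNB (E c.1).root v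

theorem val_add_one {k : ℕ} (i : Fin (k + 1)) :
    ((i + 1 : Fin (k + 1))).val = (i.val + 1) % (k + 1) := by
  rw [Fin.val_add, Fin.val_one', Nat.add_mod_mod]

theorem castSucc_add_one {k : ℕ} (i : Fin k) :
    (i.castSucc + 1 : Fin (k + 1)) = i.succ := by
  apply Fin.val_injective
  rw [val_add_one]
  simp [Nat.mod_eq_of_lt (Nat.succ_lt_succ i.isLt)]

theorem last_add_one {k : ℕ} : (Fin.last k + 1 : Fin (k + 1)) = 0 := by
  apply Fin.val_injective
  rw [val_add_one]
  simp

theorem iter_val {k : ℕ} (m : ℕ) (j : Fin (k + 1)) :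
    (((fun i : Fin (k + 1) => i + 1))^[m] j).val = (j.val + m) % (k + 1) := by
  induction m with
  | zero => simp [Nat.mod_eq_of_lt j.isLt]
  | succ m ih =>
    rw [Function.iterate_succ_apply', val_add_one, ih, Nat.mod_add_mod, Nat.add_assoc]

end SFPaux


namespace SFPaux

open Relation

variable (Q : Finset ℕ) (E : ℕ → Fm)

theorem Fsol_guarded (hmod : SysModalised Q E) (hWF : ∀ q ∈ Q, (E q).WF)
    (q : ℕ) (hq : q ∈ Q) : (Fsol Q E hmod q).Guarded := by
  intro C hC
  by_contra hnb
  obtain ⟨k, f, hinj, hrng, hedge, hlast⟩ := hC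
  -- no box on the cycle
  have hl : ∀ i, bvLabel Q E (f i).1 ≠ .box := by
    intro i hbox
    exact hnb ⟨f i, hrng ▸ Set.mem_range_self i, hbox⟩
  -- edges in the big graph, cyclically
  have hBE : ∀ x y : (Fsol Q E hmod q).V, (Fsol Q E hmod q).Edge x y →
      BE Q E hmod x.1 y.1 := by
    rintro x y ⟨j, hj⟩
    exact ⟨j, congrArg Subtype.val hj⟩
  have hnxt : ∀ i : Fin (k + 1), BE Q E hmod (f i).1 (f (i + 1)).1 := by
    intro i
    rcases Nat.lt_succ_iff_lt_or_eq.mp i.isLt with h | h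
    · have h1 := hBE _ _ (hedge ⟨i.val, h⟩)
      have e1 : (⟨i.val, h⟩ : Fin k).castSucc = i := Fin.val_injective rfl
      have e2 : (⟨i.val, h⟩ : Fin k).succ = i + 1 := by
        rw [← castSucc_add_one, e1]
      rw [e1, e2] at h1
      exact h1
    · have e1 : i = Fin.last k := Fin.val_injective h
      subst e1
      rw [last_add_one]
      exact hBE _ _ hlast
  -- decompositions
  have hdec : ∀ i, ∃ c v, (f i).1 = some ⟨c, v⟩ := by
    intro i
    exact reach_some Q E hmod q hq (f i).1 (f i).2
  by_cases hB : ∃ i, JumpAt Q E hmod (fun i => (f i).1) i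
  · -- Case B : some edge jumps; build a dependency cycle
    obtain ⟨i0, cB, vB, jB, p0, hgi0, hp0, hvar0, hland⟩ := hB
    beta_reduce at hgi0 hland
    obtain ⟨cA, hA1, hA2, _⟩ := resRoot_spec Q E hmod ⟨p0, hp0⟩
    have hlandA : (f (i0 + 1)).1 = some ⟨cA, (E cA.1).root⟩ := by
      rw [hland, resRootT, dif_pos hp0, hA1]
    set pos : ℕ → Fin (k + 1) := fun m => ((fun i : Fin (k+1) => i + 1))^[m] (i0 + 1)
      with hposdef
    have hpos0 : pos 0 = i0 + 1 := rfl
    have hposS : ∀ m, pos (m + 1) = pos m + 1 := by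
      intro m
      simp only [hposdef, Function.iterate_succ_apply']
    have hposk : pos k = i0 := by
      apply Fin.val_injective
      show (((fun i : Fin (k+1) => i + 1))^[k] (i0 + 1)).val = i0.val
      rw [iter_val, val_add_one, Nat.mod_add_mod]
      have : i0.val + 1 + k = i0.val + (k + 1) := by omega
      rw [this, Nat.add_mod_right, Nat.mod_eq_of_lt i0.isLt]
    -- the invariant around the loop
    have hK : ∀ m : ℕ, RootPath Q E (f (pos m)).1 ∧
        ∃ c2 v2, (f (pos m)).1 = some ⟨c2, v2⟩ ∧
          Relation.ReflTransGen (Dep Q E) cA.1 c2.1 := by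
      intro m
      induction m with
      | zero =>
        rw [hpos0]
        exact ⟨⟨cA, _, hlandA, Relation.ReflTransGen.refl⟩,
          cA, _, hlandA, Relation.ReflTransGen.refl⟩
      | succ m ih =>
        obtain ⟨⟨cr, vr, hr1, hrpath⟩, c2, v2, hdec2, hRT⟩ := ih
        rcases edge_analysis Q E hmod (fun i => (f i).1) (pos m) hr1 (hnxt (pos m)) with
          hint | hjmp
        · obtain ⟨c, v, j, h1, h2, _⟩ := hint
          beta_reduce at h1 h2
          have e : (⟨cr, vr⟩ : Σ c : QT Q, (E c.1).V) = ⟨c, v⟩ :=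
            Option.some.inj (hr1.symm.trans h1)
          have hpath' : Relation.ReflTransGen (E c.1).EdgeNB (E c.1).root v :=
            sig_elim Q E e (fun c' v' =>
              Relation.ReflTransGen (E c'.1).EdgeNB (E c'.1).root v') hrpath
          have hnb' : (E c.1).label v ≠ .box := by
            have := hl (pos m)
            rw [h1] at this
            exact this
          have hpath2 : Relation.ReflTransGen (E c.1).EdgeNB (E c.1).root
              ((E c.1).succ v j) :=
            hpath'.tail ⟨⟨j, rfl⟩, hnb'⟩
          rw [hposS]
          refine ⟨⟨c, _, h2, hpath2⟩, c, _, h2, ?_⟩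
          rwa [sig_fst Q E (Option.some.inj (hdec2.symm.trans h1))] at hRT
        · obtain ⟨c, v, j, p, h1, hp, hvar, h2⟩ := hjmp
          beta_reduce at h1 h2
          obtain ⟨c', hc'1, hc'2, _⟩ := resRoot_spec Q E hmod ⟨p, hp⟩
          have hland' : (f (pos m + 1)).1 = some ⟨c', (E c'.1).root⟩ := by
            rw [h2, resRootT, dif_pos hp, hc'1]
          have e : (⟨cr, vr⟩ : Σ c : QT Q, (E c.1).V) = ⟨c, v⟩ :=
            Option.some.inj (hr1.symm.trans h1)
          have hpath' : Relation.ReflTransGen (E c.1).EdgeNB (E c.1).root v :=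
            sig_elim Q E e (fun c' v' =>
              Relation.ReflTransGen (E c'.1).EdgeNB (E c'.1).root v') hrpath
          have hnb' : (E c.1).label v ≠ .box := by
            have := hl (pos m)
            rw [h1] at this
            exact this
          have hdep : Dep Q E c.1 p := by
            refine ⟨c.2, hp, fun hm => ?_⟩
            exact hm _ (hpath'.tail ⟨⟨j, rfl⟩, hnb'⟩) hvar
          rw [hposS]
          refine ⟨⟨c', _, hland', Relation.ReflTransGen.refl⟩, c', _, hland', ?_⟩
          have hRT' : Relation.ReflTransGen (Dep Q E) cA.1 c.1 := by
            rwa [sig_fst Q E (Option.some.inj (hdec2.symm.trans h1))] at hRT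
          exact hRT'.trans (Relation.ReflTransGen.head hdep hc'2)
    -- close the dependency cycle at i0
    obtain ⟨⟨cr, vr, hr1, hrpath⟩, c2, v2, hdec2, hRT⟩ := hK k
    rw [hposk] at hr1 hdec2
    have e : (⟨cr, vr⟩ : Σ c : QT Q, (E c.1).V) = ⟨cB, vB⟩ :=
      Option.some.inj (hr1.symm.trans hgi0)
    have hpath' : Relation.ReflTransGen (E cB.1).EdgeNB (E cB.1).root vB :=
      sig_elim Q E e (fun c' v' =>
        Relation.ReflTransGen (E c'.1).EdgeNB (E c'.1).root v') hrpath
    have hnb' : (E cB.1).label vB ≠ .box := by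
      have := hl i0
      rw [hgi0] at this
      exact this
    have hdep : Dep Q E cB.1 p0 := by
      refine ⟨cB.2, hp0, fun hm => ?_⟩
      exact hm _ (hpath'.tail ⟨⟨jB, rfl⟩, hnb'⟩) hvar0
    have hRTB : Relation.ReflTransGen (Dep Q E) cA.1 cB.1 := by
      rwa [sig_fst Q E (Option.some.inj (hdec2.symm.trans hgi0))] at hRT
    have hcyc : Relation.TransGen (Dep Q E) cB.1 cB.1 :=
      Relation.TransGen.head' hdep (hA2.trans hRTB)
    exact hmod cB.1 cB.2 hcyc
  · -- Case A : all edges internal; transfer the cycle to a component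
    have hint : ∀ i, IntAt Q E (fun i => (f i).1) i := by
      intro i
      obtain ⟨c, v, hcv⟩ := hdec i
      rcases edge_analysis Q E hmod (fun i => (f i).1) i hcv (hnxt i) with h | h
      · exact h
      · exact absurd ⟨i, h⟩ hB
    obtain ⟨c0, v0, hdec0⟩ := hdec 0
    have hconst : ∀ i, ∃ v, (f i).1 = some ⟨c0, v⟩ := by
      intro i
      induction i using Fin.induction with
      | zero => exact ⟨v0, hdec0⟩
      | succ i ih =>
        obtain ⟨w, hw⟩ := ih
        obtain ⟨c, v, j, h1, h2, _⟩ := hint i.castSucc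
        beta_reduce at h1 h2
        have e : (⟨c0, w⟩ : Σ c : QT Q, (E c.1).V) = ⟨c, v⟩ :=
          Option.some.inj (hw.symm.trans h1)
        rw [castSucc_add_one] at h2
        rw [h2]
        exact sig_elim Q E e (fun c' v' =>
          ∀ j' : Fin ((E c'.1).label v').ar,
            ∃ u, (some ⟨c', (E c'.1).succ v' j'⟩ : BV Q E) = some ⟨c0, u⟩)
          (fun j' => ⟨(E c0.1).succ w j', rfl⟩) j
    choose x hx using hconst
    have hEdge : ∀ i : Fin (k + 1), (E c0.1).Edge (x i) (x (i + 1)) := by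
      intro i
      obtain ⟨c, v, j, h1, h2, _⟩ := hint i
      beta_reduce at h1 h2
      exact edge_transport Q E (Option.some.inj (h1.symm.trans (hx i))) j
        (Option.some.inj (h2.symm.trans (hx (i + 1))))
    have hxinj : Function.Injective x := by
      intro a b hab
      apply hinj
      apply Subtype.ext
      rw [hx a, hx b, hab]
    have hcyc : (E c0.1).IsCycle (Set.range x) := by
      refine ⟨k, x, hxinj, rfl, ?_, ?_⟩
      · intro i
        have := hEdge i.castSucc
        rwa [castSucc_add_one] at this
      · have := hEdge (Fin.last k)
        rwa [last_add_one] at this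
    obtain ⟨b, ⟨i, rfl⟩, hb2⟩ := (hWF c0.1 c0.2).2 _ hcyc
    apply hl i
    rw [hx i]
    exact hb2

end SFPaux


namespace SFPaux

open Relation

variable (Q : Finset ℕ) (E : ℕ → Fm)

theorem label_cast {φ ψ : Fm} (h : φ = ψ) (b : φ.V) :
    φ.label b = ψ.label (cast (congrArg RGraph.V h) b) := by subst h; rfl

theorem root_cast {φ ψ : Fm} (h : φ = ψ) :
    cast (congrArg RGraph.V h) φ.root = ψ.root := by subst h; rfl

theorem succ_cast {φ ψ : Fm} (h : φ = ψ) (b : φ.V) (i : Fin (φ.label b).ar) :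
    cast (congrArg RGraph.V h) (φ.succ b i) =
      ψ.succ (cast (congrArg RGraph.V h) b)
        (Fin.cast (congrArg FLab.ar (label_cast h b)) i) := by subst h; rfl

theorem bvSucc_congr (hmod : SysModalised Q E) {u v : BV Q E} (h : u = v)
    (i : Fin (bvLabel Q E u).ar) :
    bvSucc Q E hmod u i =
      bvSucc Q E hmod v (Fin.cast (congrArg (fun w => (bvLabel Q E w).ar) h) i) := by
  subst h; rfl

/-- Image of a vertex of the substituted formula in the big graph. -/
noncomputable def img (hmod : SysModalised Q E) {q : ℕ} (hq : q ∈ Q) (a : (E q).V) :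
    ∀ o : Option ℕ, Fm.copyT (sysSubst Q (Fsol Q E hmod)) o → BV Q E
  | none, _ => some ⟨⟨q, hq⟩, a⟩
  | some n, b =>
      if hn : n ∈ Q then
        (cast (congrArg RGraph.V (if_pos hn :
            (if n ∈ Q then Fsol Q E hmod n else Fm.varFm n) = Fsol Q E hmod n)) b :
          (Fsol Q E hmod n).V).1
      else some ⟨⟨q, hq⟩, a⟩

theorem img_cast (hmod : SysModalised Q E) {q : ℕ} (hq : q ∈ Q) (a : (E q).V)
    (o o' : Option ℕ) (h : o' = o)
    (c : Fm.copyT (sysSubst Q (Fsol Q E hmod)) o') :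
    img Q E hmod hq a o (cast (congrArg (Fm.copyT (sysSubst Q (Fsol Q E hmod))) h) c) =
      img Q E hmod hq a o' c := by
  subst h; rfl

open Classical in
theorem img_copyRoot (hmod : SysModalised Q E) {q : ℕ} (hq : q ∈ Q) (a : (E q).V)
    (o : Option ℕ) (ho : o = Fm.varIdx ((E q).label a)) :
    img Q E hmod hq a o (Fm.copyRoot (sysSubst Q (Fsol Q E hmod)) o) =
      if h : ∃ p, (E q).label a = .var p ∧ p ∈ Q then resRootT Q E hmod h.choose
      else some ⟨⟨q, hq⟩, a⟩ := by
  match o with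
  | none =>
    rw [dif_neg]
    · rfl
    · rintro ⟨p, hp1, _⟩
      exact varIdx_eq_none ho.symm p hp1
  | some n =>
    have hl : (E q).label a = .var n := varIdx_eq_some ho.symm
    by_cases hn : n ∈ Q
    · have hx : ∃ p, (E q).label a = .var p ∧ p ∈ Q := ⟨n, hl, hn⟩
      rw [dif_pos hx]
      have hcn : hx.choose = n := var_inj (hx.choose_spec.1.symm.trans hl)
      have hσ : sysSubst Q (Fsol Q E hmod) n = Fsol Q E hmod n := if_pos hn
      have himg : img Q E hmod hq a (some n)
          (Fm.copyRoot (sysSubst Q (Fsol Q E hmod)) (some n)) =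
          (cast (congrArg RGraph.V hσ)
            (Fm.copyRoot (sysSubst Q (Fsol Q E hmod)) (some n))).1 := dif_pos hn
      rw [himg, hcn,
        show Fm.copyRoot (sysSubst Q (Fsol Q E hmod)) (some n) =
          (sysSubst Q (Fsol Q E hmod) n).root from rfl,
        root_cast hσ]
      rfl
    · have himg : img Q E hmod hq a (some n)
          (Fm.copyRoot (sysSubst Q (Fsol Q E hmod)) (some n)) =
          some ⟨⟨q, hq⟩, a⟩ := dif_neg hn
      rw [himg, dif_neg]
      rintro ⟨p, hp1, hp2⟩
      exact hn (var_inj (hl.symm.trans hp1) ▸ hp2)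

theorem key_label (hmod : SysModalised Q E) {q : ℕ} (hq : q ∈ Q) (a : (E q).V)
    (o : Option ℕ) (ho : o = Fm.varIdx ((E q).label a))
    (b : Fm.copyT (sysSubst Q (Fsol Q E hmod)) o) :
    bvLabel Q E (img Q E hmod hq a o b) =
      Fm.copyLabel (sysSubst Q (Fsol Q E hmod)) ((E q).label a) o b := by
  match o with
  | none => rfl
  | some n =>
    have hl : (E q).label a = .var n := varIdx_eq_some ho.symm
    by_cases hn : n ∈ Q
    · have hσ : sysSubst Q (Fsol Q E hmod) n = Fsol Q E hmod n := if_pos hn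
      have himg : img Q E hmod hq a (some n) b =
          (cast (congrArg RGraph.V hσ) b).1 := dif_pos hn
      rw [himg]
      exact (label_cast hσ b).symm
    · have hσ : sysSubst Q (Fsol Q E hmod) n = Fm.varFm n := if_neg hn
      have himg : img Q E hmod hq a (some n) b = some ⟨⟨q, hq⟩, a⟩ := dif_neg hn
      rw [himg]
      show (E q).label a = (sysSubst Q (Fsol Q E hmod) n).label b
      rw [hl, label_cast hσ b]
      rfl

theorem key_succ (hmod : SysModalised Q E) {q : ℕ} (hq : q ∈ Q) (a : (E q).V)
    (o : Option ℕ) (ho : o = Fm.varIdx ((E q).label a))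
    (b : Fm.copyT (sysSubst Q (Fsol Q E hmod)) o)
    (u : BV Q E) (hu : u = img Q E hmod hq a o b)
    (harity : (bvLabel Q E u).ar =
      (Fm.copyLabel (sysSubst Q (Fsol Q E hmod)) ((E q).label a) o b).ar)
    (i : Fin (bvLabel Q E u).ar) :
    bvSucc Q E hmod u i =
      img Q E hmod hq
        (Fm.substSucc (E q) (sysSubst Q (Fsol Q E hmod)) a o ho b (Fin.cast harity i)).1
        (Fm.varIdx ((E q).label
          (Fm.substSucc (E q) (sysSubst Q (Fsol Q E hmod)) a o ho b (Fin.cast harity i)).1))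
        (Fm.substSucc (E q) (sysSubst Q (Fsol Q E hmod)) a o ho b (Fin.cast harity i)).2 := by
  match o with
  | none =>
    rw [bvSucc_congr Q E hmod hu i]
    exact (img_copyRoot Q E hmod hq ((E q).succ a (Fin.cast harity i)) _ rfl).symm
  | some n =>
    have hl : (E q).label a = .var n := varIdx_eq_some ho.symm
    by_cases hn : n ∈ Q
    · show bvSucc Q E hmod u i =
        img Q E hmod hq a (Fm.varIdx ((E q).label a))
          (cast (congrArg (Fm.copyT (sysSubst Q (Fsol Q E hmod))) ho)
            ((sysSubst Q (Fsol Q E hmod) n).succ b (Fin.cast harity i)))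
      refine Eq.trans ?_ (img_cast Q E hmod hq a _ (some n) ho _).symm
      have hσ : sysSubst Q (Fsol Q E hmod) n = Fsol Q E hmod n := if_pos hn
      have himg2 : ∀ c : Fm.copyT (sysSubst Q (Fsol Q E hmod)) (some n),
          img Q E hmod hq a (some n) c =
          (cast (congrArg RGraph.V hσ) c).1 :=
        fun c => dif_pos hn
      refine Eq.trans ?_ (himg2 _).symm
      refine Eq.trans ?_ (congrArg Subtype.val (succ_cast hσ b (Fin.cast harity i))).symm
      refine (bvSucc_congr Q E hmod (hu.trans (himg2 b)) i).trans ?_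
      rfl
    · exfalso
      have hσ : sysSubst Q (Fsol Q E hmod) n = Fm.varFm n := if_neg hn
      have h0 : (Fm.copyLabel (sysSubst Q (Fsol Q E hmod)) ((E q).label a) (some n) b).ar
          = 0 := by
        show ((sysSubst Q (Fsol Q E hmod) n).label b).ar = 0
        rw [label_cast hσ b]
        rfl
      rw [harity, h0] at i
      exact absurd i.isLt (by omega)

end SFPaux


namespace SFPaux

open Relation

variable (Q : Finset ℕ) (E : ℕ → Fm)

open Classical in
theorem root_img (hmod : SysModalised Q E) {q : ℕ} (hq : q ∈ Q) :
    resRootT Q E hmod q =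
      img Q E hmod hq (E q).root (Fm.varIdx ((E q).label (E q).root))
        (Fm.copyRoot (sysSubst Q (Fsol Q E hmod)) (Fm.varIdx ((E q).label (E q).root))) := by
  rw [img_copyRoot Q E hmod hq (E q).root _ rfl]
  rw [resRootT, dif_pos hq, resRoot_eq]
  by_cases hx : ∃ p, (E q).label (E q).root = .var p ∧ p ∈ Q
  · rw [dif_pos hx]
    have hc : ∃ p' : QT Q, (E q).label (E q).root = .var p'.1 :=
      ⟨⟨hx.choose, hx.choose_spec.2⟩, hx.choose_spec.1⟩
    rw [dif_pos hc, resRootT, dif_pos hx.choose_spec.2]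
    have : hc.choose = ⟨hx.choose, hx.choose_spec.2⟩ := by
      apply Subtype.ext
      exact var_inj (hc.choose_spec.symm.trans hx.choose_spec.1)
    rw [this]
  · rw [dif_neg hx, dif_neg]
    rintro ⟨p', hp'⟩
    exact hx ⟨p'.1, hp', p'.2⟩

theorem bisim_Fsol (hmod : SysModalised Q E) (q : ℕ) (hq : q ∈ Q) :
    RGraph.Bisim (Fsol Q E hmod q) ((E q).subst (sysSubst Q (Fsol Q E hmod))) := by
  refine ⟨fun x y => x.1 =
    img Q E hmod hq y.1 (Fm.varIdx ((E q).label y.1)) y.2, ?_, ?_⟩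
  · rintro ⟨u, hu⟩ y hR
    have h1 : (Fsol Q E hmod q).label ⟨u, hu⟩ =
        ((E q).subst (sysSubst Q (Fsol Q E hmod))).label y := by
      have hR' : u = img Q E hmod hq y.1 (Fm.varIdx ((E q).label y.1)) y.2 := hR
      show bvLabel Q E u = _
      rw [hR']
      exact key_label Q E hmod hq y.1 _ rfl y.2
    refine ⟨h1, ?_⟩
    intro i
    exact key_succ Q E hmod hq y.1 _ rfl y.2 u hR (congrArg FLab.ar h1) i
  · exact root_img Q E hmod hq

end SFPaux

/-- **Simultaneous fixed point theorem** (Theorem `mufipohe`): every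
modalised system of equations `ℰ` on a finite set `Q` of variables has a
solution, i.e. a substitution `ℱ : q ↦ ψ_q` in which no variable of `Q`
occurs, with `ψ_q ≃ φ_q ℱ` for all `q ∈ Q`. -/
theorem simultaneous_fixed_points (Q : Finset ℕ) (E : ℕ → Fm)
    (hWF : ∀ q ∈ Q, (E q).WF) (hmod : SysModalised Q E) :
    ∃ F : ℕ → Fm, IsSolution Q E F := by
  refine ⟨SFPaux.Fsol Q E hmod, ?_, ?_, ?_⟩
  · intro q hq
    exact ⟨SFPaux.Fsol_reachable Q E hmod q, SFPaux.Fsol_guarded Q E hmod hWF q hq⟩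
  · intro q _ q' hq'
    exact SFPaux.Fsol_not_occurs Q E hmod q q' hq'
  · intro q hq
    exact SFPaux.bisim_Fsol Q E hmod q hq
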